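/- Let r < s < t, ε > 0, and let w be a continuous path. Then K_{r,s}(ε,w) + K_{s,t}(ε,w) ≤ K_{r,t}(ε,w) ≤ K_{r,s}(ε,w) + K_{s,t}(ε,w) + 1. -/

import Mathlib

open MeasureTheory ProbabilityTheory Filter Set ENNReal Asymptotics
open scoped NNReal Classical Topology

noncomputable section

/-- The grid `εℤ` of levels. -/
def lvGrid (ε : ℝ) : Set ℝ := {x | ∃ k : ℤ, x = ε * k}

/-- The successive times at which the path `w` crosses to a new point of the grid `εℤ`,
with values in `ℝ≥0∞` (`∞` meaning "never", corresponding to the convention `inf ∅ = +∞`). -/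
def hitT (ε : ℝ) (w : ℝ → ℝ) : ℕ → ℝ≥0∞
  | 0 => 0
  | n + 1 =>
      ⨅ (r : ℝ) (_ : hitT ε w n < ENNReal.ofReal r ∧ w r ∈ lvGrid ε ∧
          w r ≠ w ((hitT ε w n).toReal)), ENNReal.ofReal r

/-- `K_{s,t}(ε,w)`: the number of `ε`-level crossings of `w` in the interval `[s,t]`,
namely `#{n ≥ 2 : T_n(ε, w_{s+·}) ≤ t-s} + 1_{w_s ∈ εℤ}·1_{T_1(ε, w_{s+·}) ≤ t-s}`,
as an extended natural number. -/
def crossK (ε : ℝ) (w : ℝ → ℝ) (s t : ℝ) : ℕ∞ :=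
  {n : ℕ | 2 ≤ n ∧ hitT ε (fun r => w (s + r)) n ≤ ENNReal.ofReal (t - s)}.encard
    + (if w s ∈ lvGrid ε ∧ hitT ε (fun r => w (s + r)) 1 ≤ ENNReal.ofReal (t - s)
        then 1 else 0)

/-- `K_{s,t}(ε,w)` as an extended nonnegative real. -/
def crossKe (ε : ℝ) (w : ℝ → ℝ) (s t : ℝ) : ℝ≥0∞ := (crossK ε w s t : ℝ≥0∞)

/-- `K_{s,t}(ε,w)` as a real number (junk value `0` if the count is infinite). -/
def crossKR (ε : ℝ) (w : ℝ → ℝ) (s t : ℝ) : ℝ := (crossKe ε w s t).toReal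

/-- The averaged crossing count `K̄_{s,t}(ε,w) = ε⁻¹ ∫_{-ε/2}^{ε/2} K_{s,t}(ε, w+ρ) dρ`. -/
def avgK (ε : ℝ) (w : ℝ → ℝ) (s t : ℝ) : ℝ≥0∞ :=
  ENNReal.ofReal ε⁻¹ * ∫⁻ ρ in Set.Ioo (-(ε / 2)) (ε / 2), crossKe ε (fun r => w r + ρ) s t

/-! Write `f = w (r + ·)` and `g = w (s + ·)`, and let `m` be the last index with
`T_m(f) ≤ s - r`. The next crossing time depends only on the current time and the current
level, so once a crossing time of `f` equals `s - r` plus a crossing time of `g`, the two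
sequences stay aligned. At the junction `f` sits at the level `v = f (T_m(f))`, and `w s` is
either `v` or off the grid (otherwise `s` itself would be the crossing `T_{m+1}(f)`). By
continuity a finite crossing time is an actual hit of the grid, so `T_{m+1}(f) - (s - r)` is
`T_1(g)`, or `T_2(g)` when `g` first hits the grid at `v`. The crossings of `f` in `[r, t]`
are therefore those in `[r, s]` followed by those of `g` from an index `j₀` that is at most one
below the first index counted by `K_{s,t}`. -/

lemma isClosed_of_subset_lvGrid {ε : ℝ} {S : Set ℝ} (hS : S ⊆ lvGrid ε) : IsClosed S := by
  have hmap : IsClosedMap fun k : ℤ => ε • (k : ℝ) :=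
    (isClosedMap_smul₀ ε).comp Int.isClosedEmbedding_coe_real.isClosedMap
  have himage : (fun k : ℤ => ε • (k : ℝ)) '' ((fun k : ℤ => ε • (k : ℝ)) ⁻¹' S) = S :=
    Set.image_preimage_eq_of_subset fun x hx => by
      obtain ⟨k, rfl⟩ := hS hx
      exact ⟨k, rfl⟩
  exact himage ▸ hmap _ (isClosed_discrete _)

lemma ofReal_add_lt_ofReal_add_iff {d u : ℝ} (hd : 0 ≤ d) {τ : ℝ≥0∞} :
    ENNReal.ofReal d + τ < ENNReal.ofReal (d + u) ↔ τ < ENNReal.ofReal u := by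
  rcases le_or_gt 0 u with hu | hu
  · rw [ENNReal.ofReal_add hd hu, ENNReal.add_lt_add_iff_left ENNReal.ofReal_ne_top]
  · rw [ENNReal.ofReal_of_nonpos hu.le]
    simp only [not_lt_zero, iff_false, not_lt]
    exact (ENNReal.ofReal_le_ofReal (by linarith)).trans le_self_add

lemma iInf_ofReal_eq_ofReal_add {d : ℝ} (hd : 0 ≤ d) {P Q : ℝ → Prop}
    (hP : ∀ u, P u → d ≤ u) (hPQ : ∀ u, P (d + u) ↔ Q u) :
    ⨅ (u : ℝ) (_ : P u), ENNReal.ofReal u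
      = ENNReal.ofReal d + ⨅ (u : ℝ) (_ : Q u), ENNReal.ofReal u := by
  refine le_antisymm ?_ (le_iInf₂ fun u hu => ?_)
  · rw [ENNReal.add_iInf]
    refine le_iInf fun u => ?_
    rw [ENNReal.add_iInf]
    refine le_iInf fun hu => ?_
    have hPu := (hPQ u).2 hu
    rw [← ENNReal.ofReal_add hd (by linarith [hP _ hPu])]
    exact iInf₂_le _ hPu
  · have hQ : Q (u - d) := (hPQ _).1 (by rwa [add_sub_cancel])
    calc ENNReal.ofReal d + ⨅ (u : ℝ) (_ : Q u), ENNReal.ofReal u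
        ≤ ENNReal.ofReal d + ENNReal.ofReal (u - d) := by gcongr; exact iInf₂_le _ hQ
      _ = ENNReal.ofReal u := by
        rw [← ENNReal.ofReal_add hd (sub_nonneg.2 (hP u hu)), add_sub_cancel]

def nextHit (ε : ℝ) (f : ℝ → ℝ) (τ : ℝ≥0∞) (v : ℝ) : ℝ≥0∞ :=
  ⨅ (u : ℝ) (_ : τ < ENNReal.ofReal u ∧ f u ∈ lvGrid ε ∧ f u ≠ v), ENNReal.ofReal u

section nextHit

variable {ε : ℝ} {f : ℝ → ℝ} {τ τ' : ℝ≥0∞} {v v' : ℝ}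

lemma nextHit_le {u : ℝ} (hu : τ < ENNReal.ofReal u) (hgrid : f u ∈ lvGrid ε) (hv : f u ≠ v) :
    nextHit ε f τ v ≤ ENNReal.ofReal u :=
  iInf₂_le u ⟨hu, hgrid, hv⟩

lemma le_nextHit : τ ≤ nextHit ε f τ v :=
  le_iInf₂ fun _ hu => hu.1.le

lemma nextHit_top : nextHit ε f ⊤ v = ⊤ := by
  simp [nextHit]

lemma nextHit_le_nextHit
    (h : ∀ u, τ' < ENNReal.ofReal u → f u ∈ lvGrid ε → f u ≠ v' → τ < ENNReal.ofReal u ∧ f u ≠ v) :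
    nextHit ε f τ v ≤ nextHit ε f τ' v' :=
  le_iInf₂ fun u hu => nextHit_le (h u hu.1 hu.2.1 hu.2.2).1 hu.2.1 (h u hu.1 hu.2.1 hu.2.2).2

lemma nextHit_congr
    (h : ∀ u, f u ∈ lvGrid ε → f u ≠ v → (τ < ENNReal.ofReal u ↔ τ' < ENNReal.ofReal u)) :
    nextHit ε f τ v = nextHit ε f τ' v :=
  le_antisymm (nextHit_le_nextHit fun u hu hg hv => ⟨(h u hg hv).2 hu, hv⟩)
    (nextHit_le_nextHit fun u hu hg hv => ⟨(h u hg hv).1 hu, hv⟩)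

/-- Subsets of the grid are closed, so the infimum is attained, and not at `τ` itself because
`f τ` is the excluded level. -/
lemma nextHit_mem (hf : Continuous f) (h : nextHit ε f τ (f τ.toReal) ≠ ⊤) :
    τ < nextHit ε f τ (f τ.toReal) ∧ f (nextHit ε f τ (f τ.toReal)).toReal ∈ lvGrid ε ∧
      f (nextHit ε f τ (f τ.toReal)).toReal ≠ f τ.toReal := by
  set v := f τ.toReal
  set N := nextHit ε f τ v
  set S := {u : ℝ | τ < ENNReal.ofReal u ∧ f u ∈ lvGrid ε ∧ f u ≠ v}
  have hS : S.Nonempty := by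
    by_contra hS
    exact h (iInf₂_eq_top.2 fun u hu => (hS ⟨u, hu⟩).elim)
  have hglb : IsGLB S N.toReal := by
    refine ⟨fun u hu => ENNReal.toReal_le_of_le_ofReal ?_ (iInf₂_le u hu), fun b hb => ?_⟩
    · exact ENNReal.ofReal_pos.1 ((zero_le : (0 : ℝ≥0∞) ≤ τ).trans_lt hu.1) |>.le
    · exact (ENNReal.ofReal_le_iff_le_toReal h).1
        (le_iInf₂ fun u hu => ENNReal.ofReal_le_ofReal (hb hu))
  set C := {u : ℝ | τ ≤ ENNReal.ofReal u ∧ f u ∈ lvGrid ε \ {v}}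
  have hSC : S ⊆ C := fun u hu => ⟨hu.1.le, hu.2⟩
  have hC : IsClosed C :=
    (isClosed_le continuous_const ENNReal.continuous_ofReal).inter
      ((isClosed_of_subset_lvGrid sdiff_subset).preimage hf)
  obtain ⟨hle, hgrid, hne⟩ := closure_minimal hSC hC (hglb.mem_closure hS)
  rw [ENNReal.ofReal_toReal h] at hle
  refine ⟨hle.lt_of_ne fun hτN => hne ?_, hgrid, hne⟩
  rw [← hτN]
  rfl

end nextHit

lemma hitT_zero (ε : ℝ) (f : ℝ → ℝ) : hitT ε f 0 = 0 := rfl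

lemma hitT_succ (ε : ℝ) (f : ℝ → ℝ) (n : ℕ) :
    hitT ε f (n + 1) = nextHit ε f (hitT ε f n) (f (hitT ε f n).toReal) := rfl

lemma hitT_one (ε : ℝ) (f : ℝ → ℝ) : hitT ε f 1 = nextHit ε f 0 (f 0) := by
  rw [hitT_succ, hitT_zero, ENNReal.toReal_zero]

lemma hitT_mono (ε : ℝ) (f : ℝ → ℝ) : Monotone (hitT ε f) :=
  monotone_nat_of_le_succ fun _ => le_nextHit

lemma hitT_succ_mem {ε : ℝ} {f : ℝ → ℝ} (hf : Continuous f) {n : ℕ} (h : hitT ε f (n + 1) ≠ ⊤) :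
    hitT ε f n < hitT ε f (n + 1) ∧ f (hitT ε f (n + 1)).toReal ∈ lvGrid ε ∧
      f (hitT ε f (n + 1)).toReal ≠ f (hitT ε f n).toReal :=
  nextHit_mem hf h

section shift

variable {ε : ℝ} {w : ℝ → ℝ} {r s : ℝ}

lemma nextHit_shift (hrs : r ≤ s) (τ : ℝ≥0∞) (v : ℝ) :
    nextHit ε (fun u => w (r + u)) (ENNReal.ofReal (s - r) + τ) v
      = ENNReal.ofReal (s - r) + nextHit ε (fun u => w (s + u)) τ v := by
  have hd : 0 ≤ s - r := sub_nonneg.2 hrs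
  refine iInf_ofReal_eq_ofReal_add hd (fun u hu => ?_) fun u => ?_
  · exact ((ENNReal.ofReal_lt_ofReal_iff'.1 (le_self_add.trans_lt hu.1)).1).le
  · beta_reduce
    rw [ofReal_add_lt_ofReal_add_iff hd, show r + (s - r + u) = s + u by ring]

lemma hitT_add_eq_add_hitT (hrs : r ≤ s) {M J : ℕ}
    (h : hitT ε (fun u => w (r + u)) M = ENNReal.ofReal (s - r) + hitT ε (fun u => w (s + u)) J)
    (k : ℕ) :
    hitT ε (fun u => w (r + u)) (M + k)
      = ENNReal.ofReal (s - r) + hitT ε (fun u => w (s + u)) (J + k) := by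
  induction k with
  | zero => exact h
  | succ k ih =>
    rw [← add_assoc, ← add_assoc, hitT_succ, hitT_succ, ih, nextHit_shift hrs]
    by_cases htop : hitT ε (fun u => w (s + u)) (J + k) = ⊤
    · rw [htop, add_top, nextHit_top, nextHit_top]
    · congr 3
      rw [ENNReal.toReal_add ENNReal.ofReal_ne_top htop, ENNReal.toReal_ofReal (sub_nonneg.2 hrs)]
      ring

end shift

lemma nextHit_zero_eq_hitT {ε : ℝ} {g : ℝ → ℝ} (hg : Continuous g) (hg0 : g 0 ∉ lvGrid ε)
    (v : ℝ) :
    nextHit ε g 0 v = hitT ε g 1 ∨ (v ∈ lvGrid ε ∧ nextHit ε g 0 v = hitT ε g 2) := by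
  have hge : hitT ε g 1 ≤ nextHit ε g 0 v := by
    rw [hitT_one]
    exact nextHit_le_nextHit fun u hu hgrid _ => ⟨hu, fun h => hg0 (h ▸ hgrid)⟩
  by_cases htop : hitT ε g 1 = ⊤
  · exact Or.inl ((top_le_iff.1 (htop ▸ hge)).trans htop.symm)
  obtain ⟨hpos, hgrid, -⟩ := hitT_succ_mem hg (n := 0) htop
  set c := (hitT ε g 1).toReal
  have hc : hitT ε g 1 = ENNReal.ofReal c := (ENNReal.ofReal_toReal htop).symm
  by_cases hv : g c = v
  · refine Or.inr ⟨hv ▸ hgrid, ?_⟩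
    rw [show hitT ε g 2 = nextHit ε g (hitT ε g 1) v from hv ▸ hitT_succ ε g 1]
    refine nextHit_congr fun u hu hne => ⟨fun h0 => ?_, hpos.trans⟩
    have hle : hitT ε g 1 ≤ ENNReal.ofReal u :=
      hitT_one ε g ▸ nextHit_le h0 hu fun h => hg0 (h ▸ hu)
    refine hle.lt_of_ne fun heq => hne ?_
    rw [← hv]
    show g u = g (hitT ε g 1).toReal
    rw [heq, ENNReal.toReal_ofReal (ENNReal.ofReal_pos.1 h0).le]
  · refine Or.inl (le_antisymm ?_ hge)
    rw [hc]
    exact nextHit_le (hc ▸ hpos) hgrid hv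

def crossStart (ε x : ℝ) : ℕ := if x ∈ lvGrid ε then 1 else 2

section junction

variable {ε : ℝ} {w : ℝ → ℝ} {r s : ℝ} {m : ℕ}

lemma hitT_succ_eq_add_nextHit (hrs : r ≤ s)
    (hm : hitT ε (fun u => w (r + u)) m ≤ ENNReal.ofReal (s - r))
    (hm' : ENNReal.ofReal (s - r) < hitT ε (fun u => w (r + u)) (m + 1)) :
    hitT ε (fun u => w (r + u)) (m + 1) = ENNReal.ofReal (s - r) +
      nextHit ε (fun u => w (s + u)) 0 (w (r + (hitT ε (fun u => w (r + u)) m).toReal)) := by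
  rw [← nextHit_shift hrs, add_zero, hitT_succ]
  exact nextHit_congr fun u hgrid hne =>
    ⟨fun hu => hm'.trans_le (nextHit_le hu hgrid hne), hm.trans_lt⟩

lemma eq_of_mem_lvGrid_of_hitT_le (hrs : r ≤ s)
    (hm : hitT ε (fun u => w (r + u)) m ≤ ENNReal.ofReal (s - r))
    (hm' : ENNReal.ofReal (s - r) < hitT ε (fun u => w (r + u)) (m + 1))
    (hs : w s ∈ lvGrid ε) :
    w s = w (r + (hitT ε (fun u => w (r + u)) m).toReal) := by
  rcases hm.lt_or_eq with hlt | heq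
  · by_contra hne
    refine lt_irrefl _ (hm'.trans_le (nextHit_le (u := s - r) hlt ?_ ?_))
    · simpa using hs
    · simpa using hne
  · rw [heq, ENNReal.toReal_ofReal (sub_nonneg.2 hrs), add_sub_cancel]

lemma max_crossStart_eq (hw : Continuous w) (hm : hitT ε (fun u => w (r + u)) m ≠ ⊤) :
    max (crossStart ε (w r)) (m + 1)
      = m + crossStart ε (w (r + (hitT ε (fun u => w (r + u)) m).toReal)) := by
  cases m with
  | zero =>
    rw [hitT_zero, ENNReal.toReal_zero, add_zero, crossStart]
    split_ifs <;> rfl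
  | succ k =>
    have hv := (hitT_succ_mem (by fun_prop) hm).2.1
    simp only [crossStart, if_pos hv]
    split_ifs <;> omega

lemma exists_hitT_succ_eq_add_hitT (hw : Continuous w) (hrs : r ≤ s)
    (hm : hitT ε (fun u => w (r + u)) m ≤ ENNReal.ofReal (s - r))
    (hm' : ENNReal.ofReal (s - r) < hitT ε (fun u => w (r + u)) (m + 1)) :
    ∃ J, hitT ε (fun u => w (r + u)) (m + 1)
        = ENNReal.ofReal (s - r) + hitT ε (fun u => w (s + u)) J ∧
      J + crossStart ε (w (r + (hitT ε (fun u => w (r + u)) m).toReal)) ≤ crossStart ε (w s) + 1 ∧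
      crossStart ε (w s) ≤ J + crossStart ε (w (r + (hitT ε (fun u => w (r + u)) m).toReal)) := by
  have hshift := hitT_succ_eq_add_nextHit hrs hm hm'
  set v := w (r + (hitT ε (fun u => w (r + u)) m).toReal)
  by_cases hws : w s = v
  · refine ⟨1, hshift.trans ?_, by rw [hws]; omega, by rw [hws]; omega⟩
    rw [hitT_one]
    simp only [add_zero, hws]
  have hws' : w s ∉ lvGrid ε := fun h => hws (eq_of_mem_lvGrid_of_hitT_le hrs hm hm' h)
  have hcs : crossStart ε (w s) = 2 := if_neg hws'
  rcases nextHit_zero_eq_hitT (g := fun u => w (s + u)) (by fun_prop) (by simpa using hws') v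
    with h | ⟨hv, h⟩
  · refine ⟨1, hshift.trans (by rw [h]), ?_⟩
    rw [hcs]
    simp only [crossStart]
    split_ifs <;> omega
  · refine ⟨2, hshift.trans (by rw [h]), ?_⟩
    rw [hcs]
    simp only [crossStart, if_pos hv]
    omega

end junction

lemma exists_le_iff_le_of_monotone {α : Type*} [LinearOrder α] {T : ℕ → α} (hT : Monotone T)
    {x : α} (h0 : T 0 ≤ x) (h : ∃ n, x < T n) : ∃ m, ∀ n, T n ≤ x ↔ n ≤ m := by
  classical
  obtain ⟨m, hm⟩ : ∃ m, Nat.find h = m + 1 :=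
    Nat.exists_eq_succ_of_ne_zero fun h' => (Nat.find_spec h).not_ge (h' ▸ h0)
  refine ⟨m, fun n => ⟨fun hn => ?_, fun hn => (hT hn).trans ?_⟩⟩
  · by_contra hmn
    exact (hm ▸ Nat.find_spec h).not_ge ((hT (by omega)).trans hn)
  · exact not_lt.1 (Nat.find_min h (by omega))

lemma encard_setOf_eq_add_encard {α : Type*} [Preorder α] {T : ℕ → α} {x x' : α} {m : ℕ}
    (hm : ∀ n, T n ≤ x ↔ n ≤ m) (hx : x ≤ x') (a : ℕ) :
    {n | a ≤ n ∧ T n ≤ x'}.encard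
      = {n | a ≤ n ∧ T n ≤ x}.encard + {n | max a (m + 1) ≤ n ∧ T n ≤ x'}.encard := by
  rw [← encard_union_eq]
  · congr 1
    ext n
    simp only [mem_union, mem_ofPred_eq, max_le_iff, hm]
    constructor
    · rintro ⟨ha, hn⟩
      by_cases hnm : n ≤ m
      exacts [Or.inl ⟨ha, hnm⟩, Or.inr ⟨⟨ha, by omega⟩, hn⟩]
    · rintro (⟨ha, hn⟩ | ⟨⟨ha, -⟩, hn⟩)
      exacts [⟨ha, ((hm n).2 hn).trans hx⟩, ⟨ha, hn⟩]
  · refine disjoint_left.2 fun n hn hn' => ?_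
    have := (hm n).1 hn.2
    have := hn'.1
    omega

lemma encard_setOf_add_le (M i : ℕ) (P : ℕ → Prop) :
    {n | M + i ≤ n ∧ P n}.encard = {k | i ≤ k ∧ P (M + k)}.encard := by
  rw [← (add_right_injective M).encard_image {k | i ≤ k ∧ P (M + k)}]
  congr 1
  ext n
  simp only [mem_image, mem_ofPred_eq]
  constructor
  · rintro ⟨h, hP⟩
    exact ⟨n - M, ⟨by omega, by rwa [Nat.add_sub_cancel' (by omega)]⟩, by omega⟩
  · rintro ⟨k, ⟨hk, hP⟩, rfl⟩
    exact ⟨by omega, hP⟩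

lemma encard_setOf_eq_of_eq_add {T U : ℕ → ℝ≥0∞} {c : ℝ≥0∞} (hc : c ≠ ⊤) {M J : ℕ}
    (h : ∀ k, T (M + k) = c + U (J + k)) (i : ℕ) (y : ℝ≥0∞) :
    {n | M + i ≤ n ∧ T n ≤ c + y}.encard = {j | J + i ≤ j ∧ U j ≤ y}.encard := by
  simp only [encard_setOf_add_le, h, ENNReal.add_le_add_iff_left hc]

lemma encard_setOf_le_encard_succ_add_one (a : ℕ) (P : ℕ → Prop) :
    {n | a ≤ n ∧ P n}.encard ≤ {n | a + 1 ≤ n ∧ P n}.encard + 1 := by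
  refine (encard_mono fun n hn => ?_).trans (encard_insert_le _ a)
  rcases hn.1.eq_or_lt with rfl | ha
  exacts [mem_insert _ _, mem_insert_of_mem _ ⟨ha, hn.2⟩]

lemma encard_setOf_eq_top {a : ℕ} {P : ℕ → Prop} (h : ∀ n, P n) :
    {n | a ≤ n ∧ P n}.encard = ⊤ :=
  encard_eq_top_iff.2 ((Set.Ici_infinite a).mono fun n hn => ⟨hn, h n⟩)

lemma crossK_eq_encard (ε : ℝ) (w : ℝ → ℝ) (a b : ℝ) :
    crossK ε w a b = {n | crossStart ε (w a) ≤ n ∧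
      hitT ε (fun u => w (a + u)) n ≤ ENNReal.ofReal (b - a)}.encard := by
  set P := fun n => hitT ε (fun u => w (a + u)) n ≤ ENNReal.ofReal (b - a)
  rw [crossK, crossStart]
  by_cases ha : w a ∈ lvGrid ε
  · by_cases h1 : P 1
    · rw [if_pos ⟨ha, h1⟩, if_pos ha,
        ← encard_insert_of_notMem (a := 1) fun h => absurd h.1 (by norm_num)]
      congr 1
      ext n
      simp only [mem_insert_iff, mem_ofPred_eq]
      constructor
      · rintro (rfl | ⟨h2, hn⟩)
        exacts [⟨le_rfl, h1⟩, ⟨by omega, hn⟩]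
      · rintro ⟨h1', hn⟩
        by_cases hn1 : n = 1
        exacts [Or.inl hn1, Or.inr ⟨by omega, hn⟩]
    · rw [if_neg fun h => h1 h.2, if_pos ha, add_zero]
      congr 1
      ext n
      refine ⟨fun hn => ⟨le_trans (by norm_num) hn.1, hn.2⟩, fun hn => ⟨?_, hn.2⟩⟩
      rcases hn.1.eq_or_lt with rfl | h2
      exacts [absurd hn.2 h1, h2]
  · rw [if_neg fun h => ha h.1, if_neg ha, add_zero]

lemma exists_crossK_eq_add {ε : ℝ} {w : ℝ → ℝ} (hw : Continuous w) {r s t : ℝ} (hrs : r ≤ s)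
    (hst : s ≤ t) :
    ∃ j₀, j₀ ≤ crossStart ε (w s) ∧ crossStart ε (w s) ≤ j₀ + 1 ∧
      crossK ε w r t = crossK ε w r s + {j | j₀ ≤ j ∧
        hitT ε (fun u => w (s + u)) j ≤ ENNReal.ofReal (t - s)}.encard := by
  have htime : ENNReal.ofReal (t - r) = ENNReal.ofReal (s - r) + ENNReal.ofReal (t - s) := by
    rw [← ENNReal.ofReal_add (by linarith) (by linarith), sub_add_sub_cancel']
  rw [crossK_eq_encard, crossK_eq_encard]
  by_cases hfin : ∃ n, ENNReal.ofReal (s - r) < hitT ε (fun u => w (r + u)) n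
  · obtain ⟨m, hm⟩ := exists_le_iff_le_of_monotone (hitT_mono _ _) zero_le hfin
    have hmD := (hm m).2 le_rfl
    obtain ⟨J, hJ, hlo, hhi⟩ :=
      exists_hitT_succ_eq_add_hitT hw hrs hmD (not_le.1 fun h => by simpa using (hm _).1 h)
    set v := w (r + (hitT ε (fun u => w (r + u)) m).toReal)
    have hv : 1 ≤ crossStart ε v := by unfold crossStart; split_ifs <;> omega
    refine ⟨J + (crossStart ε v - 1), by omega, by omega, ?_⟩
    rw [encard_setOf_eq_add_encard hm (ENNReal.ofReal_le_ofReal (by linarith)),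
      max_crossStart_eq hw (ne_top_of_le_ne_top ENNReal.ofReal_ne_top hmD),
      show m + crossStart ε v = m + 1 + (crossStart ε v - 1) by omega, htime,
      encard_setOf_eq_of_eq_add ENNReal.ofReal_ne_top (hitT_add_eq_add_hitT hrs hJ)]
  · simp only [not_exists, not_lt] at hfin
    refine ⟨crossStart ε (w s), le_rfl, by omega, ?_⟩
    rw [encard_setOf_eq_top hfin,
      encard_setOf_eq_top fun n => (hfin n).trans (ENNReal.ofReal_le_ofReal (by linarith)), top_add]

theorem crossK_superadditive_general (ε : ℝ) (w : ℝ → ℝ) (hw : Continuous w)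
    (r s t : ℝ) (hrs : r < s) (hst : s < t) :
    crossK ε w r s + crossK ε w s t ≤ crossK ε w r t ∧
      crossK ε w r t ≤ crossK ε w r s + crossK ε w s t + 1 := by
  obtain ⟨j₀, hj₀, hj₀', hK⟩ := exists_crossK_eq_add (ε := ε) hw hrs.le hst.le
  rw [hK, crossK_eq_encard ε w s t, add_assoc]
  constructor
  · gcongr
  · gcongr
    exact (encard_setOf_le_encard_succ_add_one _ _).trans (by gcongr)

/-- **Superadditivity of `K`.** For `r < s < t` and a continuous path `w`,
`K_{r,s}(ε,w) + K_{s,t}(ε,w) ≤ K_{r,t}(ε,w) ≤ K_{r,s}(ε,w) + K_{s,t}(ε,w) + 1`. -/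
theorem crossK_superadditive (ε : ℝ) (hε : 0 < ε) (w : ℝ → ℝ) (hw : Continuous w)
    (r s t : ℝ) (hrs : r < s) (hst : s < t) :
    crossK ε w r s + crossK ε w s t ≤ crossK ε w r t ∧
      crossK ε w r t ≤ crossK ε w r s + crossK ε w s t + 1 :=
  crossK_superadditive_general ε w hw r s t hrs hst

end
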